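/- For a simple object W of C, let Φ(W) denote a simple object of R determined (up to isomorphism) as follows: Φ(W) := F(W) if F(W) is simple, and Φ(W) := V if F(W) ≅ V ⊕ V with V simple. Then Φ induces a bijection from the set of isomorphism classes of simple objects of C modulo the action of B onto the set of isomorphism classes of simple objects of R; that is: (a) for simple objects W, W' of C, Φ(W) ≅ Φ(W') in R if and only if W ≅ W' or W ≅ B(W') in C; (b) every simple object V of R is isomorphic to Φ(W) for some simple object W of C. -/

import Mathlib

set_option linter.unusedSectionVars false

open CategoryTheory CategoryTheory.Limits

universe v u

variable (R : Type u) [Category.{v} R] [Abelian R] [CategoryTheory.Linear ℝ R]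

/-- Objects of the category `C`: pairs `(V, ι)` with `ι ∘ ι = -1`. -/
structure CObj : Type max u v where
  V : R
  ι : V ⟶ V
  hι : ι ≫ ι = -𝟙 V

variable {R}

instance : Category.{v} (CObj R) where
  Hom W₁ W₂ := { φ : W₁.V ⟶ W₂.V // W₁.ι ≫ φ = φ ≫ W₂.ι }
  id W := ⟨𝟙 W.V, by simp⟩
  comp f g := ⟨f.1 ≫ g.1, by
    rw [← Category.assoc, f.2, Category.assoc, g.2, Category.assoc]⟩
  id_comp f := Subtype.ext (Category.id_comp f.1)
  comp_id f := Subtype.ext (Category.comp_id f.1)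
  assoc f g h := Subtype.ext (Category.assoc f.1 g.1 h.1)

@[ext]
lemma CObj.hom_ext {W₁ W₂ : CObj R} {f g : W₁ ⟶ W₂} (h : f.1 = g.1) : f = g :=
  Subtype.ext h

@[simp]
lemma CObj.id_coe (W : CObj R) : (𝟙 W : W ⟶ W).1 = 𝟙 W.V := rfl

@[simp]
lemma CObj.comp_coe {W₁ W₂ W₃ : CObj R} (f : W₁ ⟶ W₂) (g : W₂ ⟶ W₃) :
    (f ≫ g).1 = f.1 ≫ g.1 := rfl

instance (W₁ W₂ : CObj R) : Zero (W₁ ⟶ W₂) := ⟨⟨0, by simp⟩⟩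

instance (W₁ W₂ : CObj R) : Add (W₁ ⟶ W₂) :=
  ⟨fun f g => ⟨f.1 + g.1, by rw [Preadditive.comp_add, Preadditive.add_comp, f.2, g.2]⟩⟩

instance (W₁ W₂ : CObj R) : Neg (W₁ ⟶ W₂) :=
  ⟨fun f => ⟨-f.1, by rw [Preadditive.comp_neg, Preadditive.neg_comp, f.2]⟩⟩

instance (W₁ W₂ : CObj R) : Sub (W₁ ⟶ W₂) :=
  ⟨fun f g => ⟨f.1 - g.1, by rw [Preadditive.comp_sub, Preadditive.sub_comp, f.2, g.2]⟩⟩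

instance (W₁ W₂ : CObj R) : SMul ℕ (W₁ ⟶ W₂) :=
  ⟨fun n f => ⟨n • f.1, by rw [Linear.comp_smul, Linear.smul_comp, f.2]⟩⟩

instance (W₁ W₂ : CObj R) : SMul ℤ (W₁ ⟶ W₂) :=
  ⟨fun n f => ⟨n • f.1, by rw [Linear.comp_smul, Linear.smul_comp, f.2]⟩⟩

@[simp] lemma CObj.zero_coe (W₁ W₂ : CObj R) : (0 : W₁ ⟶ W₂).1 = 0 := rfl
@[simp] lemma CObj.add_coe {W₁ W₂ : CObj R} (f g : W₁ ⟶ W₂) : (f + g).1 = f.1 + g.1 := rfl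
@[simp] lemma CObj.neg_coe {W₁ W₂ : CObj R} (f : W₁ ⟶ W₂) : (-f).1 = -f.1 := rfl

instance (W₁ W₂ : CObj R) : AddCommGroup (W₁ ⟶ W₂) :=
  Function.Injective.addCommGroup (fun f : W₁ ⟶ W₂ => f.1) Subtype.val_injective
    rfl (fun _ _ => rfl) (fun _ => rfl) (fun _ _ => rfl) (fun _ _ => rfl) (fun _ _ => rfl)

instance : Preadditive (CObj R) where
  add_comp P Q S f f' g := by apply Subtype.ext; exact Preadditive.add_comp _ _ _ f.1 f'.1 g.1
  comp_add P Q S f g g' := by apply Subtype.ext; exact Preadditive.comp_add _ _ _ f.1 g.1 g'.1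

variable (R)

/-- The conjugation functor `B : C → C`. -/
def Bfunctor : CObj R ⥤ CObj R where
  obj W := ⟨W.V, -W.ι, by simp [W.hι]⟩
  map f := ⟨f.1, by simp [f.2]⟩
  map_id _ := rfl
  map_comp _ _ := rfl

/-- The forgetful functor `F : C → R`. -/
def Ffunctor : CObj R ⥤ R where
  obj W := W.V
  map f := f.1
  map_id _ := rfl
  map_comp _ _ := rfl

/-- The complexification functor `E : R → C`. -/
noncomputable def Efunctor : R ⥤ CObj R where
  obj V :=
    { V := V ⊞ V
      ι := -(biprod.snd ≫ biprod.inl) + biprod.fst ≫ biprod.inr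
      hι := by ext <;> simp }
  map φ := ⟨biprod.map φ φ, by ext <;> simp⟩
  map_id V := Subtype.ext (by ext <;> simp)
  map_comp f g := Subtype.ext (by ext <;> simp)

variable {R}

/-- The biproduct `(V₁ ⊕ V₂, ι₁ ⊕ ι₂)` of two objects of `C`. -/
noncomputable def csum (W₁ W₂ : CObj R) : CObj R where
  V := W₁.V ⊞ W₂.V
  ι := biprod.map W₁.ι W₂.ι
  hι := by ext <;> simp [W₁.hι, W₂.hι]

/-- Multiplication by `i` as a morphism in `C`. -/
def iMor (W : CObj R) : W ⟶ W := ⟨W.ι, rfl⟩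

/-- `V` represents the isomorphism class `Φ([W])` of the simple object `W` of `C`. -/
noncomputable def IsPhi {R : Type u} [Category.{v} R] [Abelian R] [CategoryTheory.Linear ℝ R] (W : CObj R) (V : R) : Prop :=
  Simple V ∧
    ((Simple ((Ffunctor R).obj W) ∧ Nonempty ((Ffunctor R).obj W ≅ V)) ∨
      (¬Simple ((Ffunctor R).obj W) ∧ Nonempty ((Ffunctor R).obj W ≅ V ⊞ V)))

/-!
A morphism `φ : F W ⟶ F W'` of `R` splits as `φ = (φ - iφi)/2 + (φ + iφi)/2`, a morphism
`W ⟶ W'` plus a morphism `W ⟶ B W'`. Kernels in `C` are computed in `R`, so Schur's lemma holds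
in `C`, and for simple `W`, `W'` every nonzero `φ` yields `W ≅ W'` or `W ≅ B W'`. In both cases of
the definition of `Φ`, `Φ(W)` is a retract of `F W` and every nonzero morphism into `F W` stays
nonzero after composing with some `F W ⟶ Φ(W)`; this turns `Φ(W) ≅ Φ(W')` into a nonzero
morphism `F W ⟶ F W'` and conversely, which gives (a).

For (b), a simple `V` either has a complex structure `j`, and then `(V, j)` is simple with
`Φ = V`, or it has none, and then `E V` is simple: an `i`-stable subobject `Y ⊆ V ⊞ V` meeting
`0 ⊞ V` trivially would project isomorphically onto `V` and carry its complex structure there,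
while one containing `0 ⊞ V` also contains `i (0 ⊞ V) = V ⊞ 0`.
-/
namespace CObj

variable {W W₁ W₂ : CObj R}

instance : (Ffunctor R).Faithful where
  map_injective h := Subtype.ext h

instance : (Ffunctor R).PreservesZeroMorphisms where
  map_zero _ _ := rfl

instance : (Ffunctor R).ReflectsIsomorphisms where
  reflects f hf :=
    have : IsIso f.1 := hf
    ⟨⟨⟨inv f.1, by rw [← cancel_mono f.1]; simp [f.2]⟩, CObj.hom_ext (by simp),
      CObj.hom_ext (by simp)⟩⟩

lemma isIso_iff_isIso_val (f : W₁ ⟶ W₂) : IsIso f ↔ IsIso f.1 :=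
  (isIso_iff_of_reflects_iso f (Ffunctor R)).symm

noncomputable def kernelObj (f : W₁ ⟶ W₂) : CObj R where
  V := kernel f.1
  ι := kernel.lift f.1 (kernel.ι f.1 ≫ W₁.ι) <| by
    rw [Category.assoc, f.2, kernel.condition_assoc, zero_comp]
  hι := by ext; simp [W₁.hι]

noncomputable def kernelι (f : W₁ ⟶ W₂) : kernelObj f ⟶ W₁ :=
  ⟨kernel.ι f.1, kernel.lift_ι _ _ _⟩

noncomputable def kernelIsLimit (f : W₁ ⟶ W₂) :
    IsLimit (KernelFork.ofι (kernelι f) (CObj.hom_ext (kernel.condition f.1))) :=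
  KernelFork.IsLimit.ofι _ _
    (fun g hg => ⟨kernel.lift f.1 g.1 (congrArg Subtype.val hg), by
      apply (cancel_mono (kernel.ι f.1)).1
      simp [kernelObj, g.2]⟩)
    (fun _ _ => CObj.hom_ext (kernel.lift_ι _ _ _))
    (fun _ _ _ hm => CObj.hom_ext
      ((cancel_mono (kernel.ι f.1)).1 (by rw [kernel.lift_ι]; exact congrArg Subtype.val hm)))

instance : HasKernels (CObj R) where
  has_limit f := HasLimit.mk ⟨_, kernelIsLimit f⟩

instance : (Ffunctor R).PreservesMonomorphisms where
  preserves f _ := by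
    have : kernelι f = 0 := by
      rw [← cancel_mono f, zero_comp]
      exact CObj.hom_ext (kernel.condition f.1)
    exact Preadditive.mono_of_kernel_zero (congrArg Subtype.val this)

lemma simple_of_simple_val (h : Simple W.V) : Simple W :=
  have : Simple ((Ffunctor R).obj W) := h
  (Ffunctor R).simple_of_simple_obj W

instance : (Bfunctor R).Faithful where
  map_injective {_ _} _ _ h := CObj.hom_ext (congrArg Subtype.val h :)

instance : (Bfunctor R).Full where
  map_surjective f := ⟨⟨f.1, by simpa [Bfunctor] using f.2⟩, rfl⟩

def conjConjIso (W : CObj R) : (Bfunctor R).obj ((Bfunctor R).obj W) ≅ W where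
  hom := ⟨𝟙 W.V, by simp [Bfunctor]⟩
  inv := ⟨𝟙 W.V, by simp [Bfunctor]⟩
  hom_inv_id := CObj.hom_ext (Category.id_comp _)
  inv_hom_id := CObj.hom_ext (Category.id_comp _)

instance : (Bfunctor R).EssSurj where
  mem_essImage W := ⟨_, ⟨conjConjIso W⟩⟩

instance : (Bfunctor R).IsEquivalence where

instance simple_conj [Simple W] : Simple ((Bfunctor R).obj W) :=
  simple_obj (Bfunctor R) W

noncomputable def linearPart (φ : W₁.V ⟶ W₂.V) : W₁ ⟶ W₂ :=
  ⟨(2⁻¹ : ℝ) • (φ - W₁.ι ≫ φ ≫ W₂.ι), by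
    simp only [Linear.comp_smul, Linear.smul_comp, Preadditive.comp_sub, Preadditive.sub_comp,
      Category.assoc, reassoc_of% W₁.hι, W₂.hι, Preadditive.neg_comp, Preadditive.comp_neg,
      Category.id_comp, Category.comp_id, sub_neg_eq_add]
    module⟩

noncomputable def antilinearPart (φ : W₁.V ⟶ W₂.V) : W₁ ⟶ (Bfunctor R).obj W₂ :=
  ⟨(2⁻¹ : ℝ) • (φ + W₁.ι ≫ φ ≫ W₂.ι), by
    simp only [Bfunctor, Linear.comp_smul, Linear.smul_comp, Preadditive.comp_add,
      Preadditive.add_comp, Category.assoc, reassoc_of% W₁.hι, W₂.hι, Preadditive.neg_comp,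
      Preadditive.comp_neg, Category.id_comp, Category.comp_id]
    module⟩

lemma antilinearPart_val (φ : W₁.V ⟶ W₂.V) :
    (antilinearPart φ).1 = φ - (linearPart φ).1 := by
  show (2⁻¹ : ℝ) • (φ + W₁.ι ≫ φ ≫ W₂.ι) = φ - (2⁻¹ : ℝ) • (φ - W₁.ι ≫ φ ≫ W₂.ι)
  module

lemma nonempty_iso_or_iso_conj_of_ne_zero [Simple W₁] [Simple W₂] {φ : W₁.V ⟶ W₂.V}
    (hφ : φ ≠ 0) : Nonempty (W₁ ≅ W₂) ∨ Nonempty (W₁ ≅ (Bfunctor R).obj W₂) := by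
  by_cases h : linearPart φ = 0
  · have h' : antilinearPart φ ≠ 0 := fun h' => hφ <| by
      have := congrArg Subtype.val h'
      rwa [antilinearPart_val, h, CObj.zero_coe, sub_zero] at this
    have := isIso_of_hom_simple h'
    exact Or.inr ⟨asIso (antilinearPart φ)⟩
  · have := isIso_of_hom_simple h
    exact Or.inl ⟨asIso (linearPart φ)⟩

end CObj

lemma not_simple_biprod_self (V : R) [Simple V] : ¬Simple (V ⊞ V) := fun _ =>
  Simple.not_isZero V (((indecomposable_of_simple (V ⊞ V)).2 V V (Iso.refl _)).elim id id)

lemma isIso_of_mono_of_comm_complexification {V : R} [Simple V]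
    (hV : ∀ j : V ⟶ V, j ≫ j ≠ -𝟙 V) {Y : CObj R} (m : Y.V ⟶ V ⊞ V) [Mono m]
    (hm : Y.ι ≫ m = m ≫ ((Efunctor R).obj V).ι) (hm0 : m ≠ 0) : IsIso m := by
  replace hm : Y.ι ≫ m = m ≫ (-(biprod.snd ≫ biprod.inl) + biprod.fst ≫ biprod.inr) := hm
  have hsnd : m ≫ biprod.snd = -(Y.ι ≫ m ≫ biprod.fst) := by simp [reassoc_of% hm]
  set a := m ≫ biprod.fst
  have ha : a ≠ 0 := fun h =>
    hm0 (biprod.hom_ext _ _ (by simpa using h) (by simp [hsnd, h]))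
  have : Epi a := epi_of_nonzero_to_simple ha
  set k := kernel.ι a
  -- `kernel a` is `Y ∩ (0 ⊞ V)`, and `t` embeds it into `V`
  set t := k ≫ m ≫ biprod.snd
  have hk : k ≫ m = t ≫ biprod.inr := biprod.hom_ext _ _ (by simp [a, k]) (by simp [t])
  by_cases ht : t = 0
  · have : Mono a := Preadditive.mono_of_kernel_zero <| show k = 0 by
      rw [← cancel_mono m, hk, ht, zero_comp, zero_comp]
    have : IsIso a := isIso_of_mono_of_epi a
    refine absurd ?_ (hV (inv a ≫ Y.ι ≫ a))
    simp only [Category.assoc, IsIso.hom_inv_id_assoc, reassoc_of% Y.hι, Preadditive.neg_comp,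
      Category.id_comp, Preadditive.comp_neg, IsIso.inv_hom_id]
  · have : Mono t := mono_of_mono_fac hk.symm
    have : IsIso t := isIso_of_mono_of_nonzero ht
    have hinr : biprod.inr = (inv t ≫ k) ≫ m := by simp [hk]
    have hinl : biprod.inl = -(inv t ≫ k ≫ Y.ι) ≫ m := by
      have := hinr =≫ (-(biprod.snd ≫ biprod.inl) + biprod.fst ≫ biprod.inr)
      simp only [Category.assoc, ← hm] at this
      simpa using congrArg Neg.neg this
    have : IsSplitEpi m := IsSplitEpi.mk'
      ⟨biprod.desc (-(inv t ≫ k ≫ Y.ι)) (inv t ≫ k), biprod.hom_ext'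
        _ _ (by simpa using hinl.symm) (by simpa using hinr.symm)⟩
    exact isIso_of_mono_of_isSplitEpi m

lemma simple_complexification {V : R} [Simple V] (hV : ∀ j : V ⟶ V, j ≫ j ≠ -𝟙 V) :
    Simple ((Efunctor R).obj V) where
  mono_isIso_iff_nonzero {Y} g _ := by
    have : Mono (show Y.V ⟶ V ⊞ V from g.1) := (Ffunctor R).map_mono g
    refine ⟨fun _ hg => ?_, fun hg => ?_⟩
    · have hE : IsZero ((Efunctor R).obj V) := IsZero.of_epi_eq_zero g hg
      exact Simple.not_isZero V (((Ffunctor R).map_isZero hE).of_mono biprod.inl)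
    · rw [CObj.isIso_iff_isIso_val]
      exact isIso_of_mono_of_comm_complexification hV g.1 g.2 fun h => hg (CObj.hom_ext h)

lemma exists_simple_isPhi (V : R) [Simple V] : ∃ W : CObj R, Simple W ∧ IsPhi W V := by
  by_cases h : ∃ j : V ⟶ V, j ≫ j = -𝟙 V
  · obtain ⟨j, hj⟩ := h
    exact ⟨⟨V, j, hj⟩, CObj.simple_of_simple_val ‹_›, ‹_›, .inl ⟨‹_›, ⟨Iso.refl V⟩⟩⟩
  · push Not at h
    exact ⟨(Efunctor R).obj V, simple_complexification h, ‹_›,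
      .inr ⟨not_simple_biprod_self V, ⟨Iso.refl _⟩⟩⟩

namespace IsPhi

variable {W W' : CObj R} {V V' : R}

lemma nonempty_retract (h : IsPhi W V) : Nonempty (Retract V ((Ffunctor R).obj W)) := by
  obtain ⟨-, ⟨-, ⟨e⟩⟩ | ⟨-, ⟨e⟩⟩⟩ := h
  · exact ⟨⟨e.inv, e.hom, e.inv_hom_id⟩⟩
  · exact ⟨⟨biprod.inl ≫ e.inv, e.hom ≫ biprod.fst, by simp⟩⟩

lemma exists_comp_ne_zero (h : IsPhi W V) {Y : R} {g : Y ⟶ (Ffunctor R).obj W} (hg : g ≠ 0) :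
    ∃ p : (Ffunctor R).obj W ⟶ V, g ≫ p ≠ 0 := by
  by_contra! H
  obtain ⟨-, ⟨-, ⟨e⟩⟩ | ⟨-, ⟨e⟩⟩⟩ := h
  · exact hg (by simpa using H e.hom =≫ e.inv)
  · refine hg ((cancel_mono e.hom).1 (biprod.hom_ext _ _ ?_ ?_))
    · simpa using H (e.hom ≫ biprod.fst)
    · simpa using H (e.hom ≫ biprod.snd)

lemma nonempty_iso_iff [Simple W] [Simple W'] (h : IsPhi W V) (h' : IsPhi W' V') :
    Nonempty (V ≅ V') ↔ Nonempty (W ≅ W') ∨ Nonempty (W ≅ (Bfunctor R).obj W') := by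
  have := h.1
  have := h'.1
  obtain ⟨ρ⟩ := h.nonempty_retract
  obtain ⟨ρ'⟩ := h'.nonempty_retract
  constructor
  · rintro ⟨e⟩
    have hφ : ρ.r ≫ e.hom ≫ ρ'.i ≠ 0 := fun h0 =>
      Simple.not_isZero V (IsZero.of_mono_eq_zero e.hom (by simpa using ρ.i ≫= h0 =≫ ρ'.r))
    exact CObj.nonempty_iso_or_iso_conj_of_ne_zero hφ
  · intro hW
    obtain ⟨e⟩ : Nonempty ((Ffunctor R).obj W ≅ (Ffunctor R).obj W') :=
      hW.elim (fun ⟨e⟩ => ⟨(Ffunctor R).mapIso e⟩) fun ⟨e⟩ => ⟨((Ffunctor R).mapIso e :)⟩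
    obtain ⟨p, hp⟩ := h'.exists_comp_ne_zero (g := ρ.i ≫ e.hom)
      fun h0 => Simple.not_isZero V (IsZero.of_mono_eq_zero _ h0)
    have := isIso_of_hom_simple hp
    exact ⟨asIso ((ρ.i ≫ e.hom) ≫ p)⟩

end IsPhi

open scoped TensorProduct Quaternion

variable [EssentiallySmall.{v} R]

theorem statement12 :
    (∀ (W W' : CObj R), Simple W → Simple W' → ∀ V V' : R,
        IsPhi W V → IsPhi W' V' →
        (Nonempty (V ≅ V') ↔ (Nonempty (W ≅ W') ∨ Nonempty (W ≅ (Bfunctor R).obj W')))) ∧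
    (∀ V : R, Simple V → ∃ W : CObj R, Simple W ∧ IsPhi W V) :=
  ⟨fun _ _ _ _ _ _ h h' => h.nonempty_iso_iff h', fun V _ => exists_simple_isPhi V⟩
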